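/- arXiv:1511.01755 — 2 statements merged into one kernel-verified Lean document; each statement's English description precedes it below -/
import Mathlib

section
/- Let K/ℚ be Galois of degree n with Galois group G, let h be a divisor of n that occurs as the order of a cyclic subgroup of G, let η ∈ K^× have multiplicatively independent conjugates, and fix an integer r ≥ 1 and a divisor δ of h. Then there exists a bound B (depending on r) such that for every prime number p > B, unramified in K/ℚ, prime to η, and with residue degree n_p = h, and every prime ideal 𝔭 above p: the least integer k ≥ 1 for which there exists ζ ∈ μ(K) with η^k ≡ ζ (mod 𝔭) does not divide r·D_{h,δ}(p). -/
open NumberField Polynomial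

/-- `x ≡ y (mod I)` for `x : K`, `y : 𝓞 K`: `x` can be written as a fraction `a/b`
with `b` invertible mod `I` and `a ≡ y·b (mod I)`. -/
def CongMod (K : Type) [Field K] [NumberField K] (I : Ideal (𝓞 K)) (x : K) (y : 𝓞 K) : Prop :=
  ∃ a b : 𝓞 K, IsUnit (Ideal.Quotient.mk I b) ∧
    algebraMap (𝓞 K) K a = x * algebraMap (𝓞 K) K b ∧
    Ideal.Quotient.mk I a = Ideal.Quotient.mk I (y * b)

/-- `η ∈ K^×` is a unit at every prime of `K` above `p`:
it is a quotient of two integers of `K` that are invertible modulo `p`. -/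
def PrimeTo (K : Type) [Field K] [NumberField K] (p : ℕ) (η : K) : Prop :=
  ∃ a b : 𝓞 K,
    IsUnit (Ideal.Quotient.mk (Ideal.span {(p : 𝓞 K)}) a) ∧
    IsUnit (Ideal.Quotient.mk (Ideal.span {(p : 𝓞 K)}) b) ∧
    algebraMap (𝓞 K) K a = η * algebraMap (𝓞 K) K b

/-- The set of integers `k ≥ 1` with `η^k ≡ 1 (mod I)`; its least element
is the order of `η` modulo `I`. -/
def OrderSet (K : Type) [Field K] [NumberField K] (I : Ideal (𝓞 K)) (η : K) : Set ℕ :=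
  {k : ℕ | 0 < k ∧ CongMod K I (η ^ k) 1}

/-- `s` is the Frobenius of `𝔭` over `p`: `s x ≡ x^p (mod 𝔭)` for every integer `x` of `K`. -/
def IsFrob (K : Type) [Field K] [NumberField K] (p : ℕ)
    (𝔭 : Ideal (𝓞 K)) (s : K ≃ₐ[ℚ] K) : Prop :=
  ∀ x : 𝓞 K, galRestrict ℤ ℚ K (𝓞 K) s x - x ^ p ∈ 𝔭

/-- `D_{h,δ}(p) = (p^h - 1)/Φ_δ(p)` as an integer. -/
noncomputable def DInt (h δ : ℕ) (p : ℕ) : ℤ :=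
  ((p : ℤ) ^ h - 1) / (Polynomial.cyclotomic δ ℤ).eval (p : ℤ)

/-!
Let `N = #μ(K)` and `q = (X ^ h - 1) / Φ_δ`, a monic integer polynomial of degree `< h` with
`q(p) = D_{h,δ}(p)`; put `e_i = N r q_i`. If `𝔭 ∣ p` has residue degree `h` and Frobenius `s`, then
`s, …, s ^ (h - 1)` are distinct and `θ_s = ∏_{i<h} s^i(η) ^ e_i ≡ η ^ (N r D) (mod 𝔭)`. Should `k`
divide `r D`, then `η ^ (N r D) ≡ ζ ^ (N r D / k) ≡ 1`, so `θ_s ≡ 1 (mod 𝔭)`. But `θ_s ≠ 1` by the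
independence of the conjugates of `η`, so writing `θ_s = A_s / B_s` with integers `A_s, B_s` that
do not depend on `p`, the nonzero norm of `A_s - B_s` is divisible by `N𝔭 = p ^ h`. As `s` ranges
over the finite group `G`, this bounds `p`.
-/

open Finset

theorem Ideal.Quotient.isUnit_mk_of_le {R : Type*} [CommRing R] {I J : Ideal R} (hIJ : I ≤ J)
    {a : R} (ha : IsUnit (Ideal.Quotient.mk I a)) : IsUnit (Ideal.Quotient.mk J a) := by
  simpa using ha.map (Ideal.Quotient.factor hIJ)

theorem pow_mul_pow_eq_of_div_zpow_sub_eq_one {G : Type*} [CommGroup G] {α β : G} {m n : ℕ}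
    (h : (α / β) ^ ((m : ℤ) - n) = 1) : α ^ m * β ^ n = α ^ n * β ^ m := by
  rwa [zpow_sub, zpow_natCast, zpow_natCast, mul_inv_eq_one, div_pow, div_pow,
    div_eq_div_iff_mul_eq_mul] at h

theorem Nat.card_le_of_forall_pow_eq_self {F : Type*} [Field F] [Finite F] {n : ℕ} (hn : 1 < n)
    (h : ∀ x : F, x ^ n = x) : Nat.card F ≤ n := by
  have := Fintype.ofFinite F
  rw [Nat.card_eq_fintype_card, ← FiniteField.X_pow_card_sub_X_natDegree_eq F hn]
  refine Polynomial.card_le_degree_of_subset_roots fun x _ => ?_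
  simp [Polynomial.mem_roots (FiniteField.X_pow_card_sub_X_ne_zero F hn), h]

theorem Ideal.natCard_int_quotient_under {R : Type*} [Ring R] {P : Ideal R} (hP : P ≠ ⊤) {p : ℕ}
    (hp : p.Prime) (hpP : (p : R) ∈ P) : Nat.card (ℤ ⧸ P.under ℤ) = p := by
  rw [← Submodule.cardQuot_apply, ← Ideal.absNorm_apply]
  have hdvd : Ideal.absNorm (P.under ℤ) ∣ p := by
    rw [← Int.natCast_dvd_natCast, ← Int.cast_mem_ideal_iff, Int.cast_natCast]
    exact hpP
  refine (hp.eq_one_or_self_of_dvd _ hdvd).resolve_left fun h1 => hP ?_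
  simpa [h1] using P.eq_top_of_isUnit_mem (Int.absNorm_under_mem P)

theorem natCard_quotient_le_natAbs_norm {S : Type*} [CommRing S] [IsDedekindDomain S]
    [Module.Free ℤ S] [Module.Finite ℤ S] {P : Ideal S} {x : S} (hx : x ∈ P) (hx0 : x ≠ 0) :
    Nat.card (S ⧸ P) ≤ (Algebra.norm ℤ x).natAbs := by
  rw [← Ideal.absNorm_span_singleton, ← Submodule.cardQuot_apply, ← Ideal.absNorm_apply]
  refine Nat.le_of_dvd (Nat.pos_of_ne_zero ?_) (Ideal.absNorm_dvd_absNorm_of_le ?_)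
  · simpa [Ideal.absNorm_eq_zero_iff] using hx0
  · simpa [Ideal.span_le] using hx

section OrbitPowProd

variable {G : Type*} [Monoid G]

def orbitPowProd {M : Type*} [CommMonoid M] [MulDistribMulAction G M] (s : G) (h : ℕ)
    (c : ℕ → ℕ) : M →* M :=
  ∏ i ∈ range h, (powMonoidHom (c i)).comp (MulDistribMulAction.toMonoidHom M (s ^ i))

theorem orbitPowProd_apply {M : Type*} [CommMonoid M] [MulDistribMulAction G M] (s : G) (h : ℕ)
    (c : ℕ → ℕ) (x : M) : orbitPowProd s h c x = ∏ i ∈ range h, (s ^ i • x) ^ c i := by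
  simp [orbitPowProd]

variable {R : Type*} [CommRing R] [MulSemiringAction G R]

def orbitCross (s : G) (h : ℕ) (c d : ℕ → ℕ) (a b : R) : R :=
  orbitPowProd s h c a * orbitPowProd s h d b - orbitPowProd s h d a * orbitPowProd s h c b

theorem map_orbitCross {S : Type*} [CommRing S] [MulSemiringAction G S] (f : R →+* S)
    (hf : ∀ (g : G) (x : R), f (g • x) = g • f x) (s : G) (h : ℕ) (c d : ℕ → ℕ) (a b : R) :
    f (orbitCross s h c d a b) = orbitCross s h c d (f a) (f b) := by
  simp [orbitCross, orbitPowProd_apply, hf]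

end OrbitPowProd

theorem sub_mem_of_mul_eq_mul {R : Type*} [CommRing R] {P : Ideal R} [P.IsPrime] {A B x y : R}
    (hxy : A * x = B * y) (h : x - y ∈ P) (hy : y ∉ P) : A - B ∈ P := by
  have : (A - B) * y = A * (y - x) := by linear_combination hxy
  refine (Ideal.IsPrime.mem_or_mem ‹_› ?_).resolve_right hy
  rw [this, ← neg_sub]
  exact P.mul_mem_left _ (P.neg_mem h)

section Residue

variable {G R : Type*} [Monoid G] [CommRing R] [MulSemiringAction G R] {P : Ideal R} {s : G}
  {p : ℕ}

theorem mk_pow_smul_eq_pow (hs : ∀ x : R, Ideal.Quotient.mk P (s • x) = Ideal.Quotient.mk P x ^ p)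
    (i : ℕ) (x : R) : Ideal.Quotient.mk P (s ^ i • x) = Ideal.Quotient.mk P x ^ p ^ i := by
  induction i generalizing x with
  | zero => simp
  | succ i ih => rw [pow_succ, mul_smul, ih, hs, ← pow_mul, ← pow_succ']

theorem mk_orbitPowProd (hs : ∀ x : R, Ideal.Quotient.mk P (s • x) = Ideal.Quotient.mk P x ^ p)
    (h : ℕ) (c : ℕ → ℕ) (x : R) :
    Ideal.Quotient.mk P (orbitPowProd s h c x)
      = Ideal.Quotient.mk P x ^ ∑ i ∈ range h, c i * p ^ i := by
  simp only [orbitPowProd_apply, map_prod, map_pow, mk_pow_smul_eq_pow hs, ← pow_mul,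
    prod_pow_eq_pow_sum, mul_comm]

theorem orbitCross_mem [P.IsPrime]
    (hs : ∀ x : R, Ideal.Quotient.mk P (s • x) = Ideal.Quotient.mk P x ^ p) (h : ℕ) {c d : ℕ → ℕ}
    {a₀ b₀ a b : R} (hab : a₀ * b = a * b₀) (ha : a ∉ P) (hb : b ∉ P)
    (hcd : Ideal.Quotient.mk P a ^ (∑ i ∈ range h, c i * p ^ i)
        * Ideal.Quotient.mk P b ^ (∑ i ∈ range h, d i * p ^ i)
      = Ideal.Quotient.mk P a ^ (∑ i ∈ range h, d i * p ^ i)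
        * Ideal.Quotient.mk P b ^ (∑ i ∈ range h, c i * p ^ i)) :
    orbitCross s h c d a₀ b₀ ∈ P := by
  set f := orbitPowProd (M := R) s h c
  set g := orbitPowProd (M := R) s h d
  have hcross : (f a₀ * g b₀) * (g a * f b) = (g a₀ * f b₀) * (f a * g b) := by
    calc (f a₀ * g b₀) * (g a * f b) = f (a₀ * b) * g (a * b₀) := by simp only [map_mul]; ring
      _ = f (a * b₀) * g (a₀ * b) := by rw [hab]
      _ = (g a₀ * f b₀) * (f a * g b) := by simp only [map_mul]; ring
  refine sub_mem_of_mul_eq_mul hcross ?_ ?_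
  · rw [← Ideal.Quotient.eq, map_mul, map_mul, mk_orbitPowProd hs, mk_orbitPowProd hs,
      mk_orbitPowProd hs, mk_orbitPowProd hs, hcd]
  · rw [← Ideal.Quotient.eq_zero_iff_mem, map_mul, mk_orbitPowProd hs, mk_orbitPowProd hs]
    simp [Ideal.Quotient.eq_zero_iff_mem, ha, hb]

theorem injOn_pow_of_natCard_quotient_eq {G R : Type*} [Group G] [Finite G] [CommRing R]
    [MulSemiringAction G R] {P : Ideal R} [P.IsMaximal] {s : G} {p h : ℕ} (hp : 1 < p)
    (hs : ∀ x : R, Ideal.Quotient.mk P (s • x) = Ideal.Quotient.mk P x ^ p)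
    (hcard : Nat.card (R ⧸ P) = p ^ h) : Set.InjOn (s ^ ·) (Set.Iio h) := by
  let := Ideal.Quotient.field P
  have : Finite (R ⧸ P) := Nat.finite_of_card_ne_zero (hcard ▸ (pow_pos (by omega) h).ne')
  have hle : p ^ h ≤ p ^ orderOf s := by
    refine hcard ▸ Nat.card_le_of_forall_pow_eq_self (Nat.one_lt_pow (orderOf_pos s).ne' hp) ?_
    intro x
    obtain ⟨x, rfl⟩ := Ideal.Quotient.mk_surjective x
    rw [← mk_pow_smul_eq_pow hs, pow_orderOf_eq_one, one_smul]
  exact pow_injOn_Iio_orderOf.mono (Set.Iio_subset_Iio ((Nat.pow_le_pow_iff_right hp).mp hle))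

end Residue

section Independence

variable {G L : Type*} [Group G] [Field L] [MulSemiringAction G L]

theorem orbitPowProd_ne_zero (s : G) (h : ℕ) (c : ℕ → ℕ) {x : L} (hx : x ≠ 0) :
    orbitPowProd s h c x ≠ 0 := by
  rw [orbitPowProd_apply]
  exact prod_ne_zero_iff.mpr fun j _ => pow_ne_zero _ ((smul_ne_zero_iff_ne _).mpr hx)

theorem orbitCross_eq_mul (s : G) (h : ℕ) (c d : ℕ → ℕ) (η b : L) :
    orbitCross s h c d (η * b) b = (orbitPowProd s h c η - orbitPowProd s h d η)
      * (orbitPowProd s h c b * orbitPowProd s h d b) := by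
  simp only [orbitCross, map_mul]
  ring

variable [Fintype G] {η : L}

theorem eq_of_orbitPowProd_eq (hη0 : η ≠ 0)
    (hind : ∀ e : G → ℤ, ∏ σ, (σ • η) ^ e σ = 1 → ∀ σ, e σ = 0) {s : G} {h : ℕ}
    (hs : Set.InjOn (s ^ ·) (Set.Iio h)) {c d : ℕ → ℕ}
    (hcd : orbitPowProd s h c η = orbitPowProd s h d η) : ∀ i < h, c i = d i := by
  classical
  let E (c : ℕ → ℕ) (σ : G) : ℕ := ∑ j ∈ range h with s ^ j = σ, c j
  have hE (c : ℕ → ℕ) : ∏ σ, (σ • η) ^ E c σ = orbitPowProd s h c η := by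
    rw [orbitPowProd_apply]
    refine Eq.trans ?_ (prod_fiberwise_of_maps_to (t := univ) (g := fun j => s ^ j)
      (fun _ _ => mem_univ _) _)
    refine prod_congr rfl fun σ _ => ?_
    rw [← prod_pow_eq_pow_sum]
    exact prod_congr rfl fun j hj => by rw [(mem_filter.mp hj).2]
  have hprod : ∏ σ, (σ • η) ^ ((E c σ : ℤ) - E d σ) = 1 := by
    have hne (σ : G) : σ • η ≠ 0 := (smul_ne_zero_iff_ne σ).mpr hη0
    simp only [zpow_sub₀ (hne _), zpow_natCast, prod_div_distrib, hE, hcd]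
    exact div_self (orbitPowProd_ne_zero s h d hη0)
  intro i hi
  have hfiber : (range h).filter (s ^ · = s ^ i) = {i} := by
    ext j
    simp only [mem_filter, mem_range, mem_singleton]
    refine ⟨fun hj => hs hj.1 hi hj.2, ?_⟩
    rintro rfl
    exact ⟨hi, rfl⟩
  have := hind _ hprod (s ^ i)
  simp only [E, hfiber, sum_singleton] at this
  omega

theorem orbitCross_ne_zero (hη0 : η ≠ 0)
    (hind : ∀ e : G → ℤ, ∏ σ, (σ • η) ^ e σ = 1 → ∀ σ, e σ = 0) {s : G} {h : ℕ}
    (hs : Set.InjOn (s ^ ·) (Set.Iio h)) {c d : ℕ → ℕ} (hcd : ∃ i < h, c i ≠ d i) {b : L}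
    (hb : b ≠ 0) : orbitCross s h c d (η * b) b ≠ 0 := by
  obtain ⟨i, hi, hne⟩ := hcd
  rw [orbitCross_eq_mul]
  refine mul_ne_zero (sub_ne_zero.mpr fun hcd => hne ?_)
    (mul_ne_zero (orbitPowProd_ne_zero s h c hb) (orbitPowProd_ne_zero s h d hb))
  exact eq_of_orbitPowProd_eq hη0 hind hs hcd i hi

end Independence

section CyclotomicCofactor

noncomputable def cyclotomicCofactor (h δ : ℕ) : ℤ[X] := ∏ d ∈ h.divisors.erase δ, cyclotomic d ℤ

variable {h δ : ℕ}

theorem cyclotomicCofactor_monic : (cyclotomicCofactor h δ).Monic :=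
  monic_prod_of_monic _ _ fun d _ => cyclotomic.monic d ℤ

theorem cyclotomicCofactor_mul_cyclotomic (hh : 0 < h) (hδ : δ ∣ h) :
    cyclotomicCofactor h δ * cyclotomic δ ℤ = X ^ h - 1 := by
  rw [cyclotomicCofactor, prod_erase_mul _ _ (Nat.mem_divisors.mpr ⟨hδ, hh.ne'⟩)]
  exact prod_cyclotomic_eq_X_pow_sub_one hh ℤ

theorem natDegree_cyclotomicCofactor_lt (hh : 0 < h) (hδ : δ ∣ h) :
    (cyclotomicCofactor h δ).natDegree < h := by
  have hdeg := congr_arg natDegree (cyclotomicCofactor_mul_cyclotomic hh hδ)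
  rw [natDegree_mul cyclotomicCofactor_monic.ne_zero (cyclotomic_ne_zero δ ℤ),
    natDegree_cyclotomic, ← C_1, natDegree_X_pow_sub_C] at hdeg
  have := Nat.totient_pos.mpr (Nat.pos_of_dvd_of_pos hδ hh)
  omega

theorem DInt_eq_eval_cyclotomicCofactor (hh : 0 < h) (hδ : δ ∣ h) {p : ℕ} (hp : 1 < p) :
    DInt h δ p = (cyclotomicCofactor h δ).eval (p : ℤ) := by
  have hev := congr_arg (eval (p : ℤ)) (cyclotomicCofactor_mul_cyclotomic hh hδ)
  rw [eval_mul, eval_sub, eval_pow, eval_X, eval_one] at hev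
  have hΦ : (cyclotomic δ ℤ).eval (p : ℤ) ≠ 0 := by
    intro h0
    rw [h0, mul_zero, eq_comm, sub_eq_zero] at hev
    exact (one_lt_pow₀ (by exact_mod_cast hp) hh.ne').ne' hev
  rw [DInt, ← hev, Int.mul_ediv_cancel _ hΦ]

end CyclotomicCofactor

section NumberField

variable {K : Type} [Field K] [NumberField K]

theorem exists_mk_smul_eq_pow [IsGalois ℚ K] {𝔭 : Ideal (𝓞 K)} [𝔭.IsPrime] [Finite (𝓞 K ⧸ 𝔭)]
    {p : ℕ} (hp : p.Prime) (hp𝔭 : (p : 𝓞 K) ∈ 𝔭) :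
    ∃ s : K ≃ₐ[ℚ] K, ∀ x : 𝓞 K, Ideal.Quotient.mk 𝔭 (s • x) = Ideal.Quotient.mk 𝔭 x ^ p := by
  obtain ⟨s, hs⟩ := IsArithFrobAt.exists_of_isInvariant ℤ (K ≃ₐ[ℚ] K) 𝔭
  refine ⟨s, fun x => ?_⟩
  rw [← Ideal.natCard_int_quotient_under Ideal.IsPrime.ne_top' hp hp𝔭]
  exact hs.mk_apply x

theorem pow_torsionOrder_eq_one {ζ : 𝓞 K} {m : ℕ} (hm : 0 < m) (hζ : ζ ^ m = 1) :
    ζ ^ Units.torsionOrder K = 1 := by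
  let u := (IsUnit.of_pow_eq_one hζ hm.ne').unit
  have hu : u ∈ rootsOfUnity (Units.torsionOrder K) (𝓞 K) := by
    rw [Units.rootsOfUnity_eq_torsion, Units.torsion, CommGroup.mem_torsion,
      isOfFinOrder_iff_pow_eq_one]
    exact ⟨m, hm, Units.ext (by simpa [u] using hζ)⟩
  simpa [u] using congr_arg Units.val ((mem_rootsOfUnity _ _).mp hu)

theorem residue_pow_mul_torsionOrder_eq_one {𝔭 : Ideal (𝓞 K)} {η : K} {a b : 𝓞 K}
    (hab : (a : K) = η * b) {α β : (𝓞 K ⧸ 𝔭)ˣ} (hα : (α : 𝓞 K ⧸ 𝔭) = Ideal.Quotient.mk 𝔭 a)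
    (hβ : (β : 𝓞 K ⧸ 𝔭) = Ideal.Quotient.mk 𝔭 b) {k : ℕ} {ζ : 𝓞 K}
    (hζ : ∃ m : ℕ, 0 < m ∧ ζ ^ m = 1) (hk : CongMod K 𝔭 (η ^ k) ζ) :
    (α / β) ^ (k * Units.torsionOrder K) = 1 := by
  obtain ⟨a', b', hb', hab', hζ'⟩ := hk
  have hint : a' * b ^ k = a ^ k * b' := by
    apply IsFractionRing.injective (𝓞 K) K
    simp only [map_mul, map_pow, hab', hab]
    ring
  have hζk : Ideal.Quotient.mk 𝔭 ζ * Ideal.Quotient.mk 𝔭 b ^ k = Ideal.Quotient.mk 𝔭 a ^ k := by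
    apply hb'.mul_left_cancel
    have := congr_arg (Ideal.Quotient.mk 𝔭) hint
    rw [map_mul, map_mul, map_pow, map_pow, hζ', map_mul] at this
    linear_combination this
  have hunit : ((α / β) ^ k : (𝓞 K ⧸ 𝔭)ˣ) = Ideal.Quotient.mk 𝔭 ζ := by
    apply (β ^ k).isUnit.mul_right_cancel
    rw [← Units.val_mul, div_pow, div_mul_cancel, Units.val_pow_eq_pow_val,
      Units.val_pow_eq_pow_val, hα, hβ, hζk]
  obtain ⟨m, hm, hζm⟩ := hζ
  ext
  rw [pow_mul, Units.val_pow_eq_pow_val, hunit, ← map_pow, pow_torsionOrder_eq_one hm hζm,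
    map_one, Units.val_one]

theorem exists_bound_residue_zpow_ne_one [IsGalois ℚ K] {η : K} (hη0 : η ≠ 0)
    (hind : ∀ e : (K ≃ₐ[ℚ] K) → ℤ, ∏ σ : K ≃ₐ[ℚ] K, σ η ^ e σ = 1 → ∀ σ, e σ = 0)
    {h : ℕ} {e : ℕ → ℤ} (he : ∃ i < h, e i ≠ 0) :
    ∃ B : ℕ, ∀ p : ℕ, p.Prime → B < p → ∀ 𝔭 : Ideal (𝓞 K), 𝔭.IsPrime → (p : 𝓞 K) ∈ 𝔭 →
      Nat.card (𝓞 K ⧸ 𝔭) = p ^ h → ∀ (a b : 𝓞 K) (α β : (𝓞 K ⧸ 𝔭)ˣ), (a : K) = η * b →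
        (α : 𝓞 K ⧸ 𝔭) = Ideal.Quotient.mk 𝔭 a → (β : 𝓞 K ⧸ 𝔭) = Ideal.Quotient.mk 𝔭 b →
        (α / β) ^ (∑ i ∈ range h, e i * (p : ℤ) ^ i) ≠ 1 := by
  obtain ⟨i, hi, hei⟩ := he
  obtain ⟨a₀, b₀, hb₀, hη⟩ := IsFractionRing.div_surjective (𝓞 K) η
  have hb₀' : (b₀ : K) ≠ 0 := by simpa using nonZeroDivisors.ne_zero hb₀
  have ha₀ : (a₀ : K) = η * b₀ := by rw [← hη, div_mul_cancel₀ _ hb₀']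
  let c i := (e i).toNat
  let d i := (-e i).toNat
  refine ⟨univ.sup fun s : K ≃ₐ[ℚ] K => (Algebra.norm ℤ (orbitCross s h c d a₀ b₀)).natAbs, ?_⟩
  intro p hp hBp 𝔭 h𝔭 hp𝔭 hcard a b α β hab hα hβ hαβ
  have : Finite (𝓞 K ⧸ 𝔭) := Nat.finite_of_card_ne_zero (hcard ▸ pow_ne_zero h hp.ne_zero)
  have : 𝔭.IsMaximal := Ideal.Quotient.maximal_of_isField _ (Finite.isField_of_domain _)
  obtain ⟨s, hs⟩ := exists_mk_smul_eq_pow hp hp𝔭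
  have hexp : ∑ i ∈ range h, e i * (p : ℤ) ^ i
      = ((∑ i ∈ range h, c i * p ^ i : ℕ) : ℤ) - (∑ i ∈ range h, d i * p ^ i : ℕ) := by
    push_cast
    rw [← sum_sub_distrib]
    exact sum_congr rfl fun i _ => by rw [← sub_mul, Int.toNat_sub_toNat_neg]
  have hmem : orbitCross s h c d a₀ b₀ ∈ 𝔭 := by
    refine orbitCross_mem hs h (a := a) (b := b) ?_ ?_ ?_ ?_
    · apply IsFractionRing.injective (𝓞 K) K
      simp only [map_mul, ha₀, hab]
      ring
    · exact fun ha => α.ne_zero (hα.trans (Ideal.Quotient.eq_zero_iff_mem.mpr ha))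
    · exact fun hb => β.ne_zero (hβ.trans (Ideal.Quotient.eq_zero_iff_mem.mpr hb))
    · rw [hexp] at hαβ
      simpa [hα, hβ] using congr_arg Units.val (pow_mul_pow_eq_of_div_zpow_sub_eq_one hαβ)
  have hne : orbitCross s h c d a₀ b₀ ≠ 0 := by
    intro h0
    refine orbitCross_ne_zero (c := c) (d := d) hη0
      (by simpa only [AlgEquiv.smul_def] using hind)
      (injOn_pow_of_natCard_quotient_eq hp.one_lt hs hcard)
      ⟨i, hi, show (e i).toNat ≠ (-e i).toNat by omega⟩ hb₀' ?_
    rw [← ha₀, ← map_orbitCross _ (fun g x => algebraMap.smul' g x K), h0, map_zero]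
  have hle := natCard_quotient_le_natAbs_norm hmem hne
  have hsup := le_sup (mem_univ s)
    (f := fun s : K ≃ₐ[ℚ] K => (Algebra.norm ℤ (orbitCross s h c d a₀ b₀)).natAbs)
  have := Nat.le_self_pow (n := h) (by omega) p
  omega

end NumberField

theorem statement_6_general
    (K : Type) [Field K] [NumberField K] [IsGalois ℚ K]
    (h : ℕ) (hcyc : ∃ s : K ≃ₐ[ℚ] K, orderOf s = h)
    (η : K) (hη0 : η ≠ 0)
    (hind : ∀ e : (K ≃ₐ[ℚ] K) → ℤ,
      (∏ σ : K ≃ₐ[ℚ] K, σ η ^ e σ) = 1 → ∀ σ, e σ = 0)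
    (r : ℕ) (hr : 1 ≤ r) (δ : ℕ) (hδ : δ ∣ h) :
    ∃ B : ℕ, ∀ p : ℕ, p.Prime → B < p →
      Squarefree (Ideal.span {(p : 𝓞 K)}) →
      PrimeTo K p η →
      (∀ 𝔮 : Ideal (𝓞 K), 𝔮.IsPrime → (p : 𝓞 K) ∈ 𝔮 → Nat.card (𝓞 K ⧸ 𝔮) = p ^ h) →
      ∀ 𝔭 : Ideal (𝓞 K), 𝔭.IsPrime → (p : 𝓞 K) ∈ 𝔭 →
        ∀ k : ℕ, IsLeast {k : ℕ | 0 < k ∧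
            ∃ ζ : 𝓞 K, (∃ m : ℕ, 0 < m ∧ ζ ^ m = 1) ∧ CongMod K 𝔭 (η ^ k) ζ} k →
          ¬ ((k : ℤ) ∣ (r : ℤ) * DInt h δ p) := by
  have hh : 0 < h := hcyc.elim fun s hs => hs ▸ orderOf_pos s
  set q := cyclotomicCofactor h δ
  have hq : q.natDegree < h := natDegree_cyclotomicCofactor_lt hh hδ
  set N := Units.torsionOrder K
  obtain ⟨B, hB⟩ := exists_bound_residue_zpow_ne_one hη0 hind (e := fun i => N * r * q.coeff i)
    ⟨q.natDegree, hq, by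
      simpa [q, cyclotomicCofactor_monic.coeff_natDegree, N, Units.torsionOrder_ne_zero]
        using Nat.one_le_iff_ne_zero.mp hr⟩
  refine ⟨B, fun p hp hBp _ ⟨a, b, ha, hb, hab⟩ hcard 𝔭 h𝔭 hp𝔭 k hk ⟨t, ht⟩ => ?_⟩
  obtain ⟨-, ζ, hζ, hkζ⟩ := hk.1
  have hle : Ideal.span {(p : 𝓞 K)} ≤ 𝔭 := (Ideal.span_singleton_le_iff_mem _).mpr hp𝔭
  have hexp : ∑ i ∈ range h, N * r * q.coeff i * (p : ℤ) ^ i = ((k * N : ℕ) : ℤ) * t := by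
    calc ∑ i ∈ range h, N * r * q.coeff i * (p : ℤ) ^ i = N * (r * q.eval (p : ℤ)) := by
          simp only [eval_eq_sum_range' hq, mul_sum, mul_assoc]
      _ = ((k * N : ℕ) : ℤ) * t := by
          rw [← DInt_eq_eval_cyclotomicCofactor hh hδ hp.one_lt, ht]
          push_cast
          ring
  refine hB p hp hBp 𝔭 h𝔭 hp𝔭 (hcard 𝔭 h𝔭 hp𝔭) a b _ _ hab
    (Ideal.Quotient.isUnit_mk_of_le hle ha).unit_spec
    (Ideal.Quotient.isUnit_mk_of_le hle hb).unit_spec ?_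
  rw [hexp, zpow_mul, zpow_natCast, residue_pow_mul_torsionOrder_eq_one hab (IsUnit.unit_spec _)
    (IsUnit.unit_spec _) hζ hkζ, one_zpow]

/-- for fixed `r ≥ 1` and `δ ∣ h`, for `p ≫ 0` (bound depending on `r`)
of residue degree `h`, the least `k ≥ 1` with `η^k ≡ ζ (mod 𝔭)` for some root of
unity `ζ` does not divide `r·D_{h,δ}(p)`. -/
theorem statement_6
    (K : Type) [Field K] [NumberField K] [IsGalois ℚ K] (n : ℕ)
    (hdeg : Module.finrank ℚ K = n)
    (h : ℕ) (hh : h ∣ n) (hcyc : ∃ s : K ≃ₐ[ℚ] K, orderOf s = h)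
    (η : K) (hη0 : η ≠ 0)
    (hind : ∀ e : (K ≃ₐ[ℚ] K) → ℤ,
      (∏ σ : K ≃ₐ[ℚ] K, σ η ^ e σ) = 1 → ∀ σ, e σ = 0)
    (r : ℕ) (hr : 1 ≤ r) (δ : ℕ) (hδ : δ ∣ h) :
    ∃ B : ℕ, ∀ p : ℕ, p.Prime → B < p →
      Squarefree (Ideal.span {(p : 𝓞 K)}) →
      PrimeTo K p η →
      (∀ 𝔮 : Ideal (𝓞 K), 𝔮.IsPrime → (p : 𝓞 K) ∈ 𝔮 → Nat.card (𝓞 K ⧸ 𝔮) = p ^ h) →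
      ∀ 𝔭 : Ideal (𝓞 K), 𝔭.IsPrime → (p : 𝓞 K) ∈ 𝔭 →
        ∀ k : ℕ, IsLeast {k : ℕ | 0 < k ∧
            ∃ ζ : 𝓞 K, (∃ m : ℕ, 0 < m ∧ ζ ^ m = 1) ∧ CongMod K 𝔭 (η ^ k) ζ} k →
          ¬ ((k : ℤ) ∣ (r : ℤ) * DInt h δ p) :=
  statement_6_general K h hcyc η hη0 hind r hr δ hδ
end

section
/- Let K be a number field, θ ∈ Z_K, ν ≥ 1 an integer, and ζ ∈ μ(K) a root of unity, and assume θ/ν is not a root of unity. If p is a prime number and k ≥ 1 an integer such that θ^k − ζ·ν^k ∈ p Z_K, then max_σ |σ(θ)|^k + ν^k ≥ p, where σ runs over the embeddings of K into ℂ. -/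
/-!
The integer `α = θ^k - ζ ν^k` is nonzero because `θ/ν` is not a root of unity, and it lies in
`p Z_K`, so `p^n` divides its norm, `n = [K : ℚ]`. On the other hand every conjugate of `α` has
modulus at most `house θ ^ k + ν^k`, since `ζ` has modulus one at every embedding. Comparing the
two bounds on `|N(α)|` and taking `n`-th roots gives the claim.
-/

open NumberField Polynomial

theorem pow_sub_mul_pow_ne_zero {F : Type*} [Field F] {x y ζ : F} {k : ℕ} (hk : k ≠ 0)
    (hy : y ≠ 0) (hζ : IsOfFinOrder ζ) (hxy : ¬ IsOfFinOrder (x / y)) :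
    x ^ k - ζ * y ^ k ≠ 0 := by
  intro h
  obtain ⟨m, hm, hζm⟩ := hζ.exists_pow_eq_one
  refine hxy (isOfFinOrder_iff_pow_eq_one.mpr ⟨k * m, by positivity, ?_⟩)
  rw [pow_mul, div_pow, sub_eq_zero.mp h, mul_div_cancel_right₀ _ (pow_ne_zero _ hy), hζm]

namespace NumberField

variable {K : Type*} [Field K] [NumberField K]

theorem house_eq_iSup (α : K) : house α = ⨆ σ : K →+* ℂ, ‖σ α‖ := by
  rw [house_eq_sup', Finset.sup'_univ_eq_ciSup, NNReal.coe_iSup]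
  rfl

theorem house_sub_le (α β : K) : house (α - β) ≤ house α + house β := by
  simp only [house, map_sub]
  exact norm_sub_le _ _

theorem house_eq_one_of_isOfFinOrder {ζ : K} (hζ : IsOfFinOrder ζ) : house ζ = 1 := by
  have h (σ : K →+* ℂ) : ‖σ ζ‖ = 1 := by
    obtain ⟨m, hm, hζm⟩ := (σ.toMonoidHom.isOfFinOrder hζ).exists_pow_eq_one
    exact Complex.norm_eq_one_of_pow_eq_one hζm hm.ne'
  simp only [house_eq_iSup, h, ciSup_const]

theorem house_pow_sub_mul_pow_le (θ : K) {ζ : K} (hζ : IsOfFinOrder ζ) (ν k : ℕ) :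
    house (θ ^ k - ζ * (ν : K) ^ k) ≤ house θ ^ k + (ν : ℝ) ^ k := by
  have hζν : house (ζ * (ν : K) ^ k) = (ν : ℝ) ^ k := by
    rw [mul_comm, ← Nat.cast_pow, house_nat_mul, house_eq_one_of_isOfFinOrder hζ, mul_one,
      Nat.cast_pow]
  calc house (θ ^ k - ζ * (ν : K) ^ k) ≤ house (θ ^ k) + house (ζ * (ν : K) ^ k) :=
        house_sub_le _ _
    _ ≤ house θ ^ k + (ν : ℝ) ^ k := by rw [hζν]; gcongr; exact house_pow_le θ k

theorem abs_norm_le_house_pow (α : K) :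
    |(Algebra.norm ℚ α : ℝ)| ≤ house α ^ Module.finrank ℚ K := by
  obtain ⟨σ⟩ := (inferInstance : Nonempty (K →+* ℂ))
  calc |(Algebra.norm ℚ α : ℝ)| = ‖Algebra.norm ℚ α‖ := (Rat.norm_cast_real _).symm
    _ ≤ ‖σ α‖ * house α ^ (Module.finrank ℚ K - 1) := norm_norm_le_norm_mul_house_pow α σ
    _ ≤ house α * house α ^ (Module.finrank ℚ K - 1) :=
        mul_le_mul_of_nonneg_right (norm_embedding_le_house α σ) (pow_nonneg (house_nonneg α) _)
    _ = house α ^ Module.finrank ℚ K := by rw [← pow_succ', Nat.sub_add_cancel Module.finrank_pos]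

theorem natCast_pow_finrank_le_abs_norm {p : ℕ} {x : 𝓞 K} (hx : x ≠ 0)
    (hpx : (p : 𝓞 K) ∣ x) :
    (p : ℝ) ^ Module.finrank ℚ K ≤ |(Algebra.norm ℚ (algebraMap (𝓞 K) K x) : ℝ)| := by
  have hdvd : (p : ℤ) ^ Module.finrank ℚ K ∣ Algebra.norm ℤ x := by
    have := map_dvd (Algebra.norm ℤ) (show algebraMap ℤ (𝓞 K) p ∣ x by simpa using hpx)
    rwa [Algebra.norm_algebraMap, RingOfIntegers.rank] at this
  have hnorm : Algebra.norm ℤ x ≠ 0 := by simpa [Algebra.norm_eq_zero_iff] using hx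
  have hle : (p : ℤ) ^ Module.finrank ℚ K ≤ |Algebra.norm ℤ x| :=
    Int.le_of_dvd (abs_pos.mpr hnorm) ((dvd_abs _ _).mpr hdvd)
  rw [← RingOfIntegers.coe_eq_algebraMap, ← Algebra.coe_norm_int, Rat.cast_intCast]
  exact_mod_cast hle

end NumberField

theorem statement_12_general
    (K : Type) [Field K] [NumberField K]
    (θ : 𝓞 K) (ν : ℕ) (hν : 1 ≤ ν)
    (ζ : 𝓞 K) (hζ : ∃ m : ℕ, 0 < m ∧ ζ ^ m = 1)
    (hroot : ¬ ∃ m : ℕ, 0 < m ∧ (algebraMap (𝓞 K) K θ / (ν : K)) ^ m = 1)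
    (p : ℕ) (k : ℕ) (hk : 1 ≤ k)
    (hcong : θ ^ k - ζ * (ν : 𝓞 K) ^ k ∈ Ideal.span {(p : 𝓞 K)}) :
    (p : ℝ) ≤ (⨆ σ : K →+* ℂ, ‖σ (algebraMap (𝓞 K) K θ)‖) ^ k + (ν : ℝ) ^ k := by
  set α : 𝓞 K := θ ^ k - ζ * (ν : 𝓞 K) ^ k
  have hζK : IsOfFinOrder (algebraMap (𝓞 K) K ζ) :=
    (algebraMap (𝓞 K) K).toMonoidHom.isOfFinOrder (isOfFinOrder_iff_pow_eq_one.mpr hζ)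
  have hαK : algebraMap (𝓞 K) K α =
      algebraMap (𝓞 K) K θ ^ k - algebraMap (𝓞 K) K ζ * (ν : K) ^ k := by simp [α]
  have hα : α ≠ 0 := by
    rw [← RingOfIntegers.coe_ne_zero_iff, hαK]
    exact pow_sub_mul_pow_ne_zero (by omega) (Nat.cast_ne_zero.mpr (by omega)) hζK
      (isOfFinOrder_iff_pow_eq_one.not.mpr hroot)
  rw [← house_eq_iSup]
  have hθ := house_nonneg (algebraMap (𝓞 K) K θ)
  refine le_of_pow_le_pow_left₀ (Module.finrank_pos (R := ℚ) (M := K)).ne' (by positivity) ?_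
  calc (p : ℝ) ^ Module.finrank ℚ K ≤ |(Algebra.norm ℚ (algebraMap (𝓞 K) K α) : ℝ)| :=
        natCast_pow_finrank_le_abs_norm hα (Ideal.mem_span_singleton.mp hcong)
    _ ≤ house (algebraMap (𝓞 K) K α) ^ Module.finrank ℚ K := abs_norm_le_house_pow _
    _ ≤ (house (algebraMap (𝓞 K) K θ) ^ k + (ν : ℝ) ^ k) ^ Module.finrank ℚ K := by
        rw [hαK]
        gcongr
        · exact house_nonneg _
        · exact house_pow_sub_mul_pow_le _ hζK ν k

/-- if `θ^k - ζ·ν^k ∈ p Z_K` with `θ/ν` not a root of unity, then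
`max_σ |σ(θ)|^k + ν^k ≥ p`. -/
theorem statement_12
    (K : Type) [Field K] [NumberField K]
    (θ : 𝓞 K) (ν : ℕ) (hν : 1 ≤ ν)
    (ζ : 𝓞 K) (hζ : ∃ m : ℕ, 0 < m ∧ ζ ^ m = 1)
    (hroot : ¬ ∃ m : ℕ, 0 < m ∧ (algebraMap (𝓞 K) K θ / (ν : K)) ^ m = 1)
    (p : ℕ) (hp : p.Prime) (k : ℕ) (hk : 1 ≤ k)
    (hcong : θ ^ k - ζ * (ν : 𝓞 K) ^ k ∈ Ideal.span {(p : 𝓞 K)}) :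
    (p : ℝ) ≤ (⨆ σ : K →+* ℂ, ‖σ (algebraMap (𝓞 K) K θ)‖) ^ k + (ν : ℝ) ^ k :=
  statement_12_general K θ ν hν ζ hζ hroot p k hk hcong
end
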